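/- arXiv:2510.00530 — 4 statements merged into one kernel-verified Lean document; each statement's English description precedes it below -/
import Mathlib

section
/- Let G be a finite simple graph, let u and v be vertices of G at graph distance d ≥ 1, let r be a nonnegative integer, and let S be a distance-r resolving set of G. Then |S| · (2r + 1) ≥ d. (Consequently, th_dim(G) = Ω(√d) for graphs of diameter d.) -/
open SimpleGraph Filter

/-- The `r`-truncated distance between vertices: `min(d(u,v), r+1)`. -/
noncomputable def truncDist {V : Type*} (G : SimpleGraph V) (r : ℕ) (u v : V) : ℕ∞ :=
  min (G.edist u v) (r + 1)

/-- `S` is a distance-`r` resolving set of `G`. -/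
def IsDistResolving {V : Type*} (G : SimpleGraph V) (r : ℕ) (S : Finset V) : Prop :=
  ∀ x y : V, x ≠ y → ∃ v ∈ S, truncDist G r v x ≠ truncDist G r v y

/-- The `r`-truncated metric dimension of `G`. -/
noncomputable def dimr {V : Type*} (G : SimpleGraph V) (r : ℕ) : ℕ :=
  sInf {k | ∃ S : Finset V, IsDistResolving G r S ∧ S.card = k}

/-- The metric dimension throttling number of `G`. -/
noncomputable def thDim {V : Type*} (G : SimpleGraph V) : ℕ :=
  sInf {m | ∃ r : ℕ, m = r + dimr G r}

/-- `S` is a resolving set of `G` (untruncated distances). -/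
def IsResolving {V : Type*} (G : SimpleGraph V) (S : Finset V) : Prop :=
  ∀ x y : V, x ≠ y → ∃ v ∈ S, G.edist v x ≠ G.edist v y

/-- The metric dimension of `G`. -/
noncomputable def metricDim {V : Type*} (G : SimpleGraph V) : ℕ :=
  sInf {k | ∃ S : Finset V, IsResolving G S ∧ S.card = k}

/-- Distance from an edge (as an unordered pair `{u,w}`) to a vertex:
`min(d(u,v), d(w,v))`. -/
noncomputable def edgeEDist {V : Type*} (G : SimpleGraph V) (e : Sym2 V) (v : V) : ℕ∞ :=
  Sym2.lift ⟨fun a b => min (G.edist a v) (G.edist b v), fun _ _ => min_comm _ _⟩ e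

/-- The `r`-truncated distance from an edge to a vertex. -/
noncomputable def truncEdgeDist {V : Type*} (G : SimpleGraph V) (r : ℕ) (e : Sym2 V)
    (v : V) : ℕ∞ :=
  min (edgeEDist G e v) (r + 1)

/-- `S` is a distance-`r` edge resolving set of `G`. -/
def IsEdgeResolving {V : Type*} (G : SimpleGraph V) (r : ℕ) (S : Finset V) : Prop :=
  ∀ e ∈ G.edgeSet, ∀ f ∈ G.edgeSet, e ≠ f →
    ∃ v ∈ S, truncEdgeDist G r e v ≠ truncEdgeDist G r f v

/-- The `r`-truncated edge metric dimension of `G`. -/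
noncomputable def edimr {V : Type*} (G : SimpleGraph V) (r : ℕ) : ℕ :=
  sInf {k | ∃ S : Finset V, IsEdgeResolving G r S ∧ S.card = k}

/-- The edge metric dimension throttling number of `G`. -/
noncomputable def thEdim {V : Type*} (G : SimpleGraph V) : ℕ :=
  sInf {m | ∃ r : ℕ, m = r + edimr G r}

/-- An item of `G` is a vertex or an edge; distance from an item to a vertex. -/
noncomputable def itemEDist {V : Type*} (G : SimpleGraph V) : V ⊕ G.edgeSet → V → ℕ∞
  | Sum.inl u, v => G.edist u v
  | Sum.inr e, v => edgeEDist G (e : Sym2 V) v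

/-- The `r`-truncated distance from an item to a vertex. -/
noncomputable def truncItemDist {V : Type*} (G : SimpleGraph V) (r : ℕ)
    (t : V ⊕ G.edgeSet) (v : V) : ℕ∞ :=
  min (itemEDist G t v) (r + 1)

/-- `S` is a distance-`r` mixed resolving set of `G`. -/
def IsMixedResolving {V : Type*} (G : SimpleGraph V) (r : ℕ) (S : Finset V) : Prop :=
  ∀ t₁ t₂ : V ⊕ G.edgeSet, t₁ ≠ t₂ →
    ∃ v ∈ S, truncItemDist G r t₁ v ≠ truncItemDist G r t₂ v

/-- The `r`-truncated mixed metric dimension of `G`. -/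
noncomputable def mdimr {V : Type*} (G : SimpleGraph V) (r : ℕ) : ℕ :=
  sInf {k | ∃ S : Finset V, IsMixedResolving G r S ∧ S.card = k}

/-- The mixed metric dimension throttling number of `G`. -/
noncomputable def thMdim {V : Type*} (G : SimpleGraph V) : ℕ :=
  sInf {m | ∃ r : ℕ, m = r + mdimr G r}

/-- `S` is a mixed resolving set of `G` (untruncated distances). -/
def IsMixedResolvingSet {V : Type*} (G : SimpleGraph V) (S : Finset V) : Prop :=
  ∀ t₁ t₂ : V ⊕ G.edgeSet, t₁ ≠ t₂ → ∃ v ∈ S, itemEDist G t₁ v ≠ itemEDist G t₂ v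

/-- The mixed metric dimension of `G`. -/
noncomputable def mixedDim {V : Type*} (G : SimpleGraph V) : ℕ :=
  sInf {k | ∃ S : Finset V, IsMixedResolvingSet G S ∧ S.card = k}

/-!
A shortest `u`–`v` walk has `d + 1` vertices `x₀, …, x_d` with `d(xᵢ, xⱼ) = |i - j|`, so they are
distinct. Two vertices at distance more than `r` from every vertex of `S` both have truncated
distance vector `(r + 1, …, r + 1)`, so at most one `xᵢ` is far from `S`; and the `r`-ball around a
vertex of `S` contains at most `2r + 1` of the `xᵢ`, any two of which are at distance at most `2r`.
Hence `d + 1 ≤ 1 + |S| (2r + 1)`.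
-/

open Finset

lemma Finset.card_le_of_forall_sub_le {s : Finset ℕ} {k : ℕ} (h : ∀ i ∈ s, ∀ j ∈ s, j - i ≤ k) :
    #s ≤ k + 1 := by
  rcases s.eq_empty_or_nonempty with rfl | hs
  · simp
  calc #s ≤ #(Icc (s.min' hs) (s.min' hs + k)) :=
        card_le_card fun j hj =>
          mem_Icc.2 ⟨s.min'_le j hj, by have := h _ (s.min'_mem hs) j hj; omega⟩
    _ = k + 1 := by rw [Nat.card_Icc]; omega

namespace SimpleGraph

variable {V : Type*} {G : SimpleGraph V}

namespace Walk

variable {u v : V} {p : G.Walk u v}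

lemma dist_getVert_getVert_of_length_eq_dist (hp : p.length = G.dist u v) {i j : ℕ}
    (hij : i ≤ j) (hj : j ≤ p.length) : G.dist (p.getVert i) (p.getVert j) = j - i := by
  have hq := length_eq_dist_of_subwalk hp (((p.drop i).isSubwalk_take (j - i)).trans
    (p.isSubwalk_drop i))
  calc G.dist (p.getVert i) (p.getVert j)
      = G.dist (p.getVert i) ((p.drop i).getVert (j - i)) := by
        rw [drop_getVert, Nat.add_sub_cancel' hij]
    _ = ((p.drop i).take (j - i)).length := hq.symm
    _ = j - i := by rw [take_length, drop_length]; omega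

lemma edist_getVert_getVert_of_length_eq_dist (hp : p.length = G.dist u v) {i j : ℕ}
    (hij : i ≤ j) (hj : j ≤ p.length) : G.edist (p.getVert i) (p.getVert j) = (j - i : ℕ) := by
  have hreach : G.Reachable (p.getVert i) (p.getVert j) :=
    (p.take i).reachable.symm.trans (p.take j).reachable
  rw [← hreach.coe_dist_eq_edist, dist_getVert_getVert_of_length_eq_dist hp hij hj]

lemma card_filter_edist_getVert_le (hp : p.length = G.dist u v) (s : V) (r : ℕ) :
    #{i ∈ range (p.length + 1) | G.edist s (p.getVert i) ≤ r} ≤ 2 * r + 1 := by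
  refine card_le_of_forall_sub_le fun i hi j hj => ?_
  simp only [mem_filter, mem_range] at hi hj
  rcases le_total i j with hij | hji
  · have : ((j - i : ℕ) : ℕ∞) ≤ (r + r : ℕ) :=
      calc ((j - i : ℕ) : ℕ∞)
          = G.edist (p.getVert i) (p.getVert j) :=
            (edist_getVert_getVert_of_length_eq_dist hp hij (by omega)).symm
        _ ≤ G.edist (p.getVert i) s + G.edist s (p.getVert j) := SimpleGraph.edist_triangle
        _ ≤ (r + r : ℕ) := by
            rw [edist_comm, Nat.cast_add]
            exact add_le_add hi.2 hj.2
    have : j - i ≤ r + r := by exact_mod_cast this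
    omega
  · omega

end Walk

lemma IsDistResolving.subsingleton_far {r : ℕ} {S : Finset V} (hS : IsDistResolving G r S) :
    {x | ∀ s ∈ S, (r : ℕ∞) < G.edist s x}.Subsingleton := by
  intro x hx y hy
  by_contra hxy
  obtain ⟨s, hs, hne⟩ := hS x y hxy
  have htrunc : ∀ z, (r : ℕ∞) < G.edist s z → truncDist G r s z = r + 1 :=
    fun z hz => min_eq_right (Order.add_one_le_of_lt hz)
  exact hne ((htrunc x (hx s hs)).trans (htrunc y (hy s hs)).symm)

end SimpleGraph

theorem stmt3_general {V : Type*} (G : SimpleGraph V) (u v : V) (d r : ℕ)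
    (hd : G.edist u v = d) (S : Finset V)
    (hres : IsDistResolving G r S) :
    d ≤ S.card * (2 * r + 1) := by
  classical
  obtain ⟨p, hpd⟩ := exists_walk_of_edist_eq_coe hd
  have hp : p.length = G.dist u v := by
    rw [hpd]; exact_mod_cast (p.reachable.coe_dist_eq_edist.trans hd).symm
  let near (s : V) := {i ∈ range (p.length + 1) | G.edist s (p.getVert i) ≤ r}
  let far := {i ∈ range (p.length + 1) | ∀ s ∈ S, (r : ℕ∞) < G.edist s (p.getVert i)}
  have hcover : range (p.length + 1) ⊆ far ∪ S.biUnion near := by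
    intro i hi
    by_cases h : ∀ s ∈ S, (r : ℕ∞) < G.edist s (p.getVert i)
    · exact mem_union_left _ (mem_filter.2 ⟨hi, h⟩)
    · push Not at h
      obtain ⟨s, hs, hle⟩ := h
      exact mem_union_right _ (mem_biUnion.2 ⟨s, hs, mem_filter.2 ⟨hi, hle⟩⟩)
  have hfar : #far ≤ 1 := card_le_one.2 fun i hi j hj => by
    simp only [far, mem_filter, mem_range] at hi hj
    exact (p.isPath_of_length_eq_dist hp).getVert_injOn (show i ≤ p.length by omega)
      (show j ≤ p.length by omega) (hres.subsingleton_far hi.2 hj.2)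
  suffices d + 1 ≤ 1 + S.card * (2 * r + 1) by omega
  calc d + 1 = #(range (p.length + 1)) := by simp [hpd]
    _ ≤ #far + #(S.biUnion near) := (card_le_card hcover).trans (card_union_le _ _)
    _ ≤ 1 + ∑ s ∈ S, #(near s) := add_le_add hfar card_biUnion_le
    _ ≤ 1 + S.card * (2 * r + 1) := by
      grw [sum_le_card_nsmul S _ _ fun s _ => p.card_filter_edist_getVert_le hp s r, smul_eq_mul]

/-- If `u` and `v` are vertices at graph distance `d ≥ 1` and `S` is a
distance-`r` resolving set of `G`, then `|S| * (2r+1) ≥ d`. -/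
theorem stmt3 {V : Type*} [Fintype V] (G : SimpleGraph V) (u v : V) (d r : ℕ)
    (hd : G.edist u v = d) (hd1 : 1 ≤ d) (S : Finset V)
    (hres : IsDistResolving G r S) :
    d ≤ S.card * (2 * r + 1) :=
  stmt3_general G u v d r hd S hres
end

section
/- Let G be a finite tree (a finite connected acyclic simple graph) and let W be a nonempty set of vertices of G such that the induced subgraph G[W] is connected (so G[W] is a subtree of G). Then th_dim(G[W]) ≤ th_dim(G). -/
open SimpleGraph Filter

/-!
Project every vertex `s` of the tree onto its gate in the subtree `W`: the vertex `g ∈ W` through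
which every path from `s` into `W` passes, so that `d(s, x) = d(s, g) + d(g, x)` for `x ∈ W`.
Distances inside the subtree are those of the tree, and `min(d(s, g) + d(g, x), r + 1)` depends
only on `min(d(g, x), r + 1)`, so the gates of a distance-`r` resolving set of `G` form a
distance-`r` resolving set of `G[W]` that is no larger. Hence `dim_r(G[W]) ≤ dim_r(G)` for
every `r`.
-/

namespace SimpleGraph

variable {V : Type*} {G : SimpleGraph V}

lemma Walk.IsPath.append {u v w : V} {p : G.Walk u v} {q : G.Walk v w}
    (hp : p.IsPath) (hq : q.IsPath) (h : ∀ x ∈ p.support, x ∈ q.support → x = v) :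
    (p.append q).IsPath := by
  have hq' := hq.support_nodup
  rw [← q.cons_tail_support, List.nodup_cons] at hq'
  rw [Walk.isPath_def, Walk.support_append, List.nodup_append]
  refine ⟨hp.support_nodup, hq'.2, ?_⟩
  rintro x hxp y hyq rfl
  have hxv := h x hxp (q.cons_tail_support ▸ List.mem_cons_of_mem _ hyq)
  exact hq'.1 (hxv ▸ hyq)

lemma IsAcyclic.edist_eq_length (hG : G.IsAcyclic) {u v : V} {p : G.Walk u v}
    (hp : p.IsPath) : G.edist u v = p.length := by
  classical
  obtain ⟨q, hq⟩ := p.reachable.exists_walk_length_eq_edist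
  have hpq : p = q.bypass :=
    congrArg Subtype.val ((hG.subsingleton_path u v).elim ⟨p, hp⟩ q.toPath)
  refine le_antisymm p.edist_le ?_
  rw [← hq, hpq]
  exact_mod_cast q.length_bypass_le_length

lemma Reachable.exists_isPath_support_subset {W : Set V} {a b : W}
    (h : (G.induce W).Reachable a b) :
    ∃ p : G.Walk a b, p.IsPath ∧ ∀ x ∈ p.support, x ∈ W := by
  classical
  obtain ⟨q, hq⟩ := h.some.toPath
  let p : G.Walk a b := q.map (Embedding.induce W).toHom
  refine ⟨p, hq.map Subtype.val_injective, fun x hx => ?_⟩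
  rw [show p.support = q.support.map Subtype.val from Walk.support_map _ _, List.mem_map] at hx
  obtain ⟨y, -, rfl⟩ := hx
  exact y.2

lemma IsAcyclic.edist_induce (hG : G.IsAcyclic) {W : Set V} {a b : W}
    (h : (G.induce W).Reachable a b) : (G.induce W).edist a b = G.edist a b := by
  classical
  obtain ⟨q, hq⟩ := h.some.toPath
  have hmap := hG.edist_eq_length (hq.map (f := (Embedding.induce W).toHom) Subtype.val_injective)
  rw [Walk.length_map] at hmap
  rw [(hG.induce W).edist_eq_length hq, ← hmap]
  rfl

lemma Walk.exists_walk_to_first_mem {W : Set V} {s x : V} (p : G.Walk s x) (hx : x ∈ W) :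
    ∃ w ∈ W, ∃ q : G.Walk s w, ∀ u ∈ q.support, u ∈ W → u = w := by
  induction p with
  | nil => exact ⟨_, hx, .nil, by simp⟩
  | @cons a b c h p ih =>
    by_cases ha : a ∈ W
    · exact ⟨a, ha, .nil, by simp⟩
    obtain ⟨w, hw, q, hq⟩ := ih hx
    refine ⟨w, hw, .cons h q, ?_⟩
    intro u hu huW
    rw [Walk.support_cons, List.mem_cons] at hu
    rcases hu with rfl | hu
    · exact absurd huW ha
    · exact hq u hu huW

lemma IsAcyclic.exists_gate (hG : G.IsAcyclic) (hGc : G.Connected) {W : Set V}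
    (hW : W.Nonempty) (hWc : (G.induce W).Connected) (s : V) :
    ∃ g : W, ∀ x : W, G.edist s x = G.edist s g + G.edist g x := by
  classical
  obtain ⟨x₀, hx₀⟩ := hW
  obtain ⟨g, hg, q, hq⟩ := (hGc.preconnected s x₀).some.exists_walk_to_first_mem hx₀
  refine ⟨⟨g, hg⟩, fun x => ?_⟩
  obtain ⟨p, hp, hpW⟩ := (hWc.preconnected ⟨g, hg⟩ x).exists_isPath_support_subset
  have hpath : (q.bypass.append p).IsPath :=
    q.bypass_isPath.append hp fun y hy hy' =>
      hq y (q.support_bypass_subset_support hy) (hpW y hy')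
  rw [hG.edist_eq_length hpath, hG.edist_eq_length q.bypass_isPath,
    hG.edist_eq_length hp, Walk.length_append, Nat.cast_add]

end SimpleGraph

lemma ENat.min_add_min_self (a b t : ℕ∞) : min (a + min b t) t = min (a + b) t := by
  rcases le_total b t with h | h
  · rw [min_eq_left h]
  · rw [min_eq_right h, min_eq_right (le_add_self : t ≤ a + t),
      min_eq_right (le_add_self.trans (add_le_add_right h a))]

section Resolving

variable {V : Type*} {G : SimpleGraph V} {r : ℕ}

lemma isDistResolving_univ [Fintype V] : IsDistResolving G r Finset.univ := by
  intro x y hxy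
  refine ⟨x, Finset.mem_univ x, fun h => ?_⟩
  have hpos : 0 < truncDist G r x y :=
    lt_min (G.edist_pos_of_ne hxy) (by positivity)
  rw [← h] at hpos
  simp [truncDist] at hpos

lemma exists_isDistResolving_card_eq_dimr [Fintype V] :
    ∃ S : Finset V, IsDistResolving G r S ∧ S.card = dimr G r :=
  Nat.sInf_mem (s := {k | ∃ S : Finset V, IsDistResolving G r S ∧ S.card = k})
    ⟨_, Finset.univ, isDistResolving_univ, rfl⟩

lemma dimr_le_card {S : Finset V} (hS : IsDistResolving G r S) : dimr G r ≤ S.card :=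
  Nat.sInf_le ⟨S, hS, rfl⟩

lemma IsDistResolving.image_gate [DecidableEq V] {W : Set V} {S : Finset V}
    (hS : IsDistResolving G r S) (gate : V → W)
    (hgate : ∀ s (x : W), G.edist s x = G.edist s (gate s) + G.edist (gate s) x)
    (hdist : ∀ a b : W, (G.induce W).edist a b = G.edist a b) :
    IsDistResolving (G.induce W) r (S.image gate) := by
  intro x y hxy
  obtain ⟨s, hs, hne⟩ := hS x y (Subtype.coe_injective.ne hxy)
  refine ⟨gate s, Finset.mem_image_of_mem _ hs, fun heq => hne ?_⟩
  rw [truncDist, truncDist, hdist, hdist] at heq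
  have hsplit : ∀ z : W, min (G.edist s z) (r + 1) =
      min (G.edist s (gate s) + min (G.edist (gate s) z) (r + 1)) (r + 1) := fun z => by
    rw [hgate s z, ENat.min_add_min_self]
  rw [truncDist, truncDist, hsplit x, hsplit y, heq]

end Resolving

lemma dimr_induce_le_of_isAcyclic {V : Type*} [Fintype V] {G : SimpleGraph V}
    (hGc : G.Connected) (hGa : G.IsAcyclic) {W : Set V} (hW : W.Nonempty)
    (hWc : (G.induce W).Connected) (r : ℕ) : dimr (G.induce W) r ≤ dimr G r := by
  classical
  obtain ⟨S, hS, hcard⟩ := exists_isDistResolving_card_eq_dimr (G := G) (r := r)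
  choose gate hgate using hGa.exists_gate hGc hW hWc
  calc dimr (G.induce W) r
      ≤ (S.image gate).card :=
        dimr_le_card (hS.image_gate gate hgate fun a b => hGa.edist_induce (hWc.preconnected a b))
    _ ≤ S.card := Finset.card_image_le
    _ = dimr G r := hcard

lemma thDim_le_thDim_of_forall_dimr_le {V V' : Type*} {G : SimpleGraph V}
    {H : SimpleGraph V'} (h : ∀ r, dimr H r ≤ dimr G r) : thDim H ≤ thDim G := by
  obtain ⟨r, hr⟩ : thDim G ∈ {m | ∃ r : ℕ, m = r + dimr G r} := Nat.sInf_mem ⟨_, 0, rfl⟩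
  calc thDim H ≤ r + dimr H r := Nat.sInf_le ⟨r, rfl⟩
    _ ≤ r + dimr G r := Nat.add_le_add_left (h r) r
    _ = thDim G := hr.symm

/-- If `G` is a finite tree and `W` is a nonempty set of vertices whose
induced subgraph is connected (a subtree), then `th_dim(G[W]) ≤ th_dim(G)`. -/
theorem stmt6 {V : Type*} [Fintype V] (G : SimpleGraph V)
    (hGc : G.Connected) (hGa : G.IsAcyclic) (W : Set V)
    (hW : W.Nonempty) (hWc : (G.induce W).Connected) :
    thDim (G.induce W) ≤ thDim G :=
  thDim_le_thDim_of_forall_dimr_le (dimr_induce_le_of_isAcyclic hGc hGa hW hWc)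
end

section
/- For all positive integers s and t, the edge metric dimension throttling number of the complete bipartite graph K_{s,t} satisfies th_edim(K_{s,t}) = s + t − 2. -/
open SimpleGraph Filter

/-! In `K_{s,t}` every vertex off an edge is adjacent to the endpoint of that edge on the other
side, so the distance from an edge to a vertex is `0` or `1` according to whether the vertex is
an endpoint. Truncation at any `r` therefore changes nothing, and a set resolves the edges iff
it separates them as two-element sets. Two vertices outside such a set `S` cannot lie on the
same side, since together with a common neighbour they span two edges that only they tell
apart; hence `|S| ≥ s + t - 2`, and removing one vertex from each side attains this. -/

open Finset

section

variable {V : Type*} {G : SimpleGraph V}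

lemma edgeEDist_mk (a b v : V) : edgeEDist G s(a, b) v = min (G.edist a v) (G.edist b v) :=
  rfl

lemma edgeEDist_eq_zero_of_mem {e : Sym2 V} {v : V} (hv : v ∈ e) : edgeEDist G e v = 0 := by
  induction e using Sym2.ind with
  | _ a b => rcases Sym2.mem_iff.mp hv with rfl | rfl <;> simp [edgeEDist_mk]

lemma edgeEDist_eq_one_of_notMem_of_adj {e : Sym2 V} {v w : V} (hv : v ∉ e) (hw : w ∈ e)
    (hwv : G.Adj w v) : edgeEDist G e v = 1 := by
  induction e using Sym2.ind with
  | _ a b =>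
    have hpos : ∀ x ∈ s(a, b), 1 ≤ G.edist x v := fun x hx =>
      Order.one_le_iff_ne_zero.mpr fun h => hv (edist_eq_zero_iff.mp h ▸ hx)
    refine le_antisymm ?_ (le_min (hpos a (Sym2.mem_mk_left a b)) (hpos b (Sym2.mem_mk_right a b)))
    rw [edgeEDist_mk, ← edist_eq_one_iff_adj.mpr hwv]
    rcases Sym2.mem_iff.mp hw with rfl | rfl
    exacts [min_le_left _ _, min_le_right _ _]

lemma thEdim_eq_edimr_zero (h : ∀ r, edimr G 0 ≤ edimr G r) :
    thEdim G = edimr G 0 := by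
  refine le_antisymm (Nat.sInf_le ⟨0, (zero_add _).symm⟩) (le_csInf ⟨_, 0, rfl⟩ ?_)
  rintro m ⟨r, rfl⟩
  exact (h r).trans (Nat.le_add_left _ _)

end

namespace SimpleGraph

variable {V : Type*} (G : SimpleGraph V)

def EveryEdgeDominates : Prop :=
  ∀ e ∈ G.edgeSet, ∀ v ∉ e, ∃ w ∈ e, G.Adj w v

def SeparatesEdges (S : Finset V) : Prop :=
  ∀ e ∈ G.edgeSet, ∀ f ∈ G.edgeSet, e ≠ f → ∃ v ∈ S, ¬(v ∈ e ↔ v ∈ f)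

variable {G}

lemma EveryEdgeDominates.truncEdgeDist_eq_ite [DecidableEq V] (hG : G.EveryEdgeDominates)
    (r : ℕ) {e : Sym2 V} (he : e ∈ G.edgeSet) (v : V) :
    truncEdgeDist G r e v = if v ∈ e then 0 else 1 := by
  by_cases hv : v ∈ e
  · simp [truncEdgeDist, edgeEDist_eq_zero_of_mem hv, hv]
  · obtain ⟨w, hw, hwv⟩ := hG e he v hv
    simp [truncEdgeDist, edgeEDist_eq_one_of_notMem_of_adj hv hw hwv, hv]

lemma EveryEdgeDominates.isEdgeResolving_iff (hG : G.EveryEdgeDominates) (r : ℕ)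
    (S : Finset V) : IsEdgeResolving G r S ↔ G.SeparatesEdges S := by
  refine forall₂_congr fun e he => forall₂_congr fun f hf => imp_congr_right fun _ =>
    exists_congr fun v => and_congr_right fun _ => ?_
  classical
  rw [hG.truncEdgeDist_eq_ite r he, hG.truncEdgeDist_eq_ite r hf]
  split_ifs with hve hvf hvf <;> simp [hve, hvf]

lemma SeparatesEdges.mem_or_mem_of_adj {S : Finset V} (hS : G.SeparatesEdges S) {x y z : V}
    (hxy : x ≠ y) (hxz : G.Adj x z) (hyz : G.Adj y z) : x ∈ S ∨ y ∈ S := by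
  by_contra! h
  obtain ⟨v, hvS, hv⟩ := hS s(x, z) hxz s(y, z) hyz (by simp [hxy, hxz.ne])
  have hvx : v ≠ x := fun hvx => h.1 (hvx ▸ hvS)
  have hvy : v ≠ y := fun hvy => h.2 (hvy ▸ hvS)
  simp [hvx, hvy] at hv

variable {α β : Type*}

lemma everyEdgeDominates_completeBipartiteGraph :
    (completeBipartiteGraph α β).EveryEdgeDominates := by
  rw [EveryEdgeDominates, edgeSet_completeBipartiteGraph]
  rintro _ ⟨⟨i, j⟩, rfl⟩ (v | v) hv
  · exact ⟨.inr j, Sym2.mem_mk_right _ _, by simp⟩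
  · exact ⟨.inl i, Sym2.mem_mk_left _ _, by simp⟩

variable [Fintype α] [Fintype β] [DecidableEq α] [DecidableEq β]

lemma le_card_of_separatesEdges_completeBipartiteGraph [Nonempty α] [Nonempty β]
    {S : Finset (α ⊕ β)} (hS : (completeBipartiteGraph α β).SeparatesEdges S) :
    Fintype.card α + Fintype.card β - 2 ≤ #S := by
  have hcompl : #Sᶜ ≤ 2 := by
    refine card_le_card_of_injOn Sum.isLeft (fun _ _ => mem_univ _) ?_
    intro x hx y hy hxy
    by_contra hne
    obtain ⟨z, hxz, hyz⟩ :
        ∃ z, (completeBipartiteGraph α β).Adj x z ∧ (completeBipartiteGraph α β).Adj y z := by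
      rcases x with i | j <;> rcases y with i' | j' <;> simp at hxy
      exacts [⟨.inr (Classical.arbitrary β), by simp, by simp⟩,
        ⟨.inl (Classical.arbitrary α), by simp, by simp⟩]
    exact (hS.mem_or_mem_of_adj hne hxz hyz).elim (mem_compl.mp hx) (mem_compl.mp hy)
  rw [card_compl, Fintype.card_sum] at hcompl
  omega

lemma separatesEdges_completeBipartiteGraph_compl_pair (a : α) (b : β) :
    (completeBipartiteGraph α β).SeparatesEdges {.inl a, .inr b}ᶜ := by
  rw [SeparatesEdges, edgeSet_completeBipartiteGraph]
  rintro _ ⟨⟨i, j⟩, rfl⟩ _ ⟨⟨i', j'⟩, rfl⟩ hne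
  by_cases hi : i = i'
  · subst hi
    have hj : j ≠ j' := by rintro rfl; exact hne rfl
    by_cases hb : j = b
    · subst hb
      exact ⟨.inr j', by simp [Ne.symm hj], by simp [Ne.symm hj]⟩
    · exact ⟨.inr j, by simp [hb], by simp [hj]⟩
  · by_cases ha : i = a
    · subst ha
      exact ⟨.inl i', by simp [Ne.symm hi], by simp [Ne.symm hi]⟩
    · exact ⟨.inl i, by simp [ha], by simp [hi]⟩

lemma edimr_completeBipartiteGraph [Nonempty α] [Nonempty β] (r : ℕ) :
    edimr (completeBipartiteGraph α β) r = Fintype.card α + Fintype.card β - 2 := by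
  have hres := everyEdgeDominates_completeBipartiteGraph.isEdgeResolving_iff
    (G := completeBipartiteGraph α β) r
  obtain ⟨a⟩ := ‹Nonempty α›
  obtain ⟨b⟩ := ‹Nonempty β›
  have hsep := (hres _).mpr (separatesEdges_completeBipartiteGraph_compl_pair a b)
  have hcard : #({.inl a, .inr b}ᶜ : Finset (α ⊕ β)) = Fintype.card α + Fintype.card β - 2 := by
    rw [card_compl, Fintype.card_sum, card_pair Sum.inl_ne_inr]
  refine le_antisymm (Nat.sInf_le ⟨_, hsep, hcard⟩) (le_csInf ⟨_, _, hsep, rfl⟩ ?_)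
  rintro k ⟨S, hS, rfl⟩
  exact le_card_of_separatesEdges_completeBipartiteGraph ((hres S).mp hS)

end SimpleGraph

/-- For all positive integers `s, t`,
`th_edim(K_{s,t}) = s + t - 2`. -/
theorem stmt13 (s t : ℕ) (hs : 1 ≤ s) (ht : 1 ≤ t) :
    thEdim (completeBipartiteGraph (Fin s) (Fin t)) = s + t - 2 := by
  have : Nonempty (Fin s) := ⟨⟨0, hs⟩⟩
  have : Nonempty (Fin t) := ⟨⟨0, ht⟩⟩
  have h := edimr_completeBipartiteGraph (α := Fin s) (β := Fin t)
  rw [thEdim_eq_edimr_zero fun r => (h 0).trans_le (h r).ge, h 0, Fintype.card_fin,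
    Fintype.card_fin]
end

section
/- For all positive integers n, the edge metric dimension throttling number of the complete graph K_n equals 0 if n ≤ 2, and equals n − 1 if n > 2. -/
open SimpleGraph Filter

/-
In `K_V` every vertex is at distance `0` or `1` from an edge, so for `r ≥ 0` a vertex `v`
separates the edges `e ≠ f` exactly when it lies on one of them but not the other. Two distinct
edges have two such vertices, one on each, so all vertices but one always resolve the edges, and
nothing smaller does once `|V| ≥ 3`: two unused vertices `x, y` and a third vertex `z` give edges
`zx, zy` that no other vertex separates. When `|V| ≤ 2` there is at most one edge. Either way the
radius `r` costs without helping, and the throttling number is attained at `r = 0`.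
-/

theorem Sym2.exists_mem_notMem_of_ne {α : Type*} {e f : Sym2 α} (he : ¬e.IsDiag) (hef : e ≠ f) :
    ∃ x ∈ e, x ∉ f := by
  induction e using Sym2.ind with
  | _ a b =>
  by_contra! h
  exact hef ((Sym2.mem_and_mem_iff (by simpa using he)).1 ⟨h a (by simp), h b (by simp)⟩).symm

theorem thEdim_eq_of_forall_edimr_eq {V : Type*} {G : SimpleGraph V} {k : ℕ}
    (h : ∀ r, edimr G r = k) : thEdim G = k := by
  have hk : k ∈ {m | ∃ r : ℕ, m = r + edimr G r} := ⟨0, by rw [h, zero_add]⟩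
  refine le_antisymm (Nat.sInf_le hk) (le_csInf ⟨k, hk⟩ ?_)
  rintro m ⟨r, rfl⟩
  rw [h]
  exact Nat.le_add_left k r

section CompleteGraph

variable {V : Type*}

theorem truncEdgeDist_top [DecidableEq V] (r : ℕ) (e : Sym2 V) (v : V) :
    truncEdgeDist ⊤ r e v = if v ∈ e then 0 else 1 := by
  induction e using Sym2.ind with
  | _ a b =>
  have h1 : (1 : ℕ∞) ≤ r + 1 := le_add_self
  by_cases ha : a = v
  · subst ha; simp [truncEdgeDist, edgeEDist]
  by_cases hb : b = v
  · subst hb; simp [truncEdgeDist, edgeEDist]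
  simp [truncEdgeDist, edgeEDist, edist_top, ha, hb, Ne.symm ha, Ne.symm hb, h1]

theorem truncEdgeDist_top_ne_iff {r : ℕ} {e f : Sym2 V} {v : V} :
    truncEdgeDist ⊤ r e v ≠ truncEdgeDist ⊤ r f v ↔ ¬(v ∈ e ↔ v ∈ f) := by
  classical
  rw [truncEdgeDist_top, truncEdgeDist_top]
  split_ifs <;> simp_all

variable [Fintype V]

theorem isEdgeResolving_top_erase [DecidableEq V] (r : ℕ) (i : V) :
    IsEdgeResolving ⊤ r (Finset.univ.erase i) := by
  intro e he f hf hef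
  obtain ⟨p, hpe, hpf⟩ := Sym2.exists_mem_notMem_of_ne (not_isDiag_of_mem_edgeSet _ he) hef
  obtain ⟨q, hqf, hqe⟩ := Sym2.exists_mem_notMem_of_ne (not_isDiag_of_mem_edgeSet _ hf) hef.symm
  by_cases hpi : p = i
  · have hqi : q ≠ i := by rintro rfl; exact hqe (hpi ▸ hpe)
    exact ⟨q, by simpa using hqi, truncEdgeDist_top_ne_iff.2 (by tauto)⟩
  · exact ⟨p, by simpa using hpi, truncEdgeDist_top_ne_iff.2 (by tauto)⟩

theorem card_sub_one_le_of_isEdgeResolving_top (hV : 3 ≤ Fintype.card V) {r : ℕ}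
    {S : Finset V} (hS : IsEdgeResolving ⊤ r S) : Fintype.card V - 1 ≤ S.card := by
  classical
  have hSc : Sᶜ.card ≤ 1 := by
    refine Finset.card_le_one.2 fun x hx y hy => ?_
    by_contra hxy
    obtain ⟨z, hzx, hzy⟩ :=
      ENat.exists_ne_ne_of_three_le (by simpa [ENat.card_eq_coe_fintype_card] using hV) x y
    obtain ⟨v, hvS, hv⟩ := hS s(z, x) (by simpa using hzx) s(z, y) (by simpa using hzy)
      (by simp [hxy, hzy])
    have hvx : v ≠ x := by rintro rfl; simp_all
    have hvy : v ≠ y := by rintro rfl; simp_all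
    simp [truncEdgeDist_top_ne_iff, hvx, hvy] at hv
  rw [Finset.card_compl] at hSc
  omega

theorem edimr_top (hV : 3 ≤ Fintype.card V) (r : ℕ) :
    edimr (⊤ : SimpleGraph V) r = Fintype.card V - 1 := by
  classical
  obtain ⟨i⟩ : Nonempty V := Fintype.card_pos_iff.1 (by omega)
  have hmem :
      Fintype.card V - 1 ∈ {k | ∃ S : Finset V, IsEdgeResolving ⊤ r S ∧ S.card = k} :=
    ⟨_, isEdgeResolving_top_erase r i, by simp [Finset.card_erase_of_mem]⟩
  refine le_antisymm (Nat.sInf_le hmem) (le_csInf ⟨_, hmem⟩ ?_)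
  rintro k ⟨S, hS, rfl⟩
  exact card_sub_one_le_of_isEdgeResolving_top hV hS

theorem edimr_top_of_card_le_two (hV : Fintype.card V ≤ 2) (r : ℕ) :
    edimr (⊤ : SimpleGraph V) r = 0 := by
  refine Nat.sInf_eq_zero.2 (Or.inl ⟨∅, fun e he f hf hef => ?_, rfl⟩)
  induction e using Sym2.ind with
  | _ a b =>
  obtain ⟨q, -, hqe⟩ := Sym2.exists_mem_notMem_of_ne (not_isDiag_of_mem_edgeSet _ hf) hef.symm
  have : 2 < Fintype.card V :=
    Fintype.two_lt_card_iff.2 ⟨a, b, q, by simpa using he, by aesop, by aesop⟩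
  omega

end CompleteGraph

theorem stmt14_general (n : ℕ) :
    thEdim (completeGraph (Fin n)) = if n ≤ 2 then 0 else n - 1 := by
  rw [completeGraph_eq_top]
  refine thEdim_eq_of_forall_edimr_eq fun r => ?_
  split_ifs with hn
  · exact edimr_top_of_card_le_two (by simpa using hn) r
  · simpa using edimr_top (V := Fin n) (by simp; omega) r

/-- `th_edim(K_n) = 0` if `n ≤ 2` and `th_edim(K_n) = n - 1` if
`n > 2`. -/
theorem stmt14 (n : ℕ) (hn : 1 ≤ n) :
    thEdim (completeGraph (Fin n)) = if n ≤ 2 then 0 else n - 1 :=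
  stmt14_general n
end
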